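/- Let (X, F) be a set system with opR_r(F) = 0 (for some r ≥ 1). Then for every s ≥ 1 and n ≥ 0, ψ^s_F(n) ≤ (∑_{i=0}^{r−1} C(s,i))^n. -/

import Mathlib

/-- A leaf `ξ ∈ (2^s)^n` of a `2^s`-ary element tree `T` is properly labeled by `A ⊆ X`
if for all `j < n` and `i < s`, the `i`-th coordinate of the label of the initial segment
`ξ|_{[j]}` belongs to `A` iff `ξ(j)(i) = 1`. -/
def OpProper {X : Type*} {s : ℕ} (T : List (Fin s → Bool) → (Fin s → X)) {n : ℕ}
    (ξ : Fin n → (Fin s → Bool)) (A : Set X) : Prop :=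
  ∀ (j : Fin n) (i : Fin s), (T ((List.ofFn ξ).take j.1) i ∈ A ↔ ξ j i = true)

/-- There is a `2^s`-ary element tree of height `k` with labels from `X` in which every leaf
is properly labeled by some member of `F`. -/
def HasOpTree {X : Type*} (F : Set (Set X)) (s k : ℕ) : Prop :=
  ∃ T : List (Fin s → Bool) → (Fin s → X),
    ∀ ξ : Fin k → (Fin s → Bool), ∃ A ∈ F, OpProper T ξ A

/-- The `op_s` shatter function `ψ^s_F(n)`: the maximum number of leaves properly labeled by
members of `F` in a `2^s`-ary element tree of height `n`. -/
noncomputable def opShatter {X : Type*} (F : Set (Set X)) (s n : ℕ) : ℕ :=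
  sSup {m : ℕ | ∃ T : List (Fin s → Bool) → (Fin s → X),
    m = {ξ : Fin n → (Fin s → Bool) | ∃ A ∈ F, OpProper T ξ A}.ncard}

/-!
Since `opR_r(F) = 0`, no `r`-tuple of points is shattered by `F`. Hence for every label `x` of a
node, the family of patterns that `F` cuts out on the `s` points of `x` shatters no set of size
`r`, and by the Sauer–Shelah lemma it has at most `∑_{i<r} C(s,i)` members. A properly labeled leaf
of a tree of height `n + 1` is such a pattern at the root followed by a properly labeled leaf of
the corresponding subtree, so induction on the height gives the bound.
-/

open Finset

section Traces

variable {X ι : Type*} [Fintype ι] [DecidableEq ι]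

open scoped Classical in
noncomputable def traces (F : Set (Set X)) (x : ι → X) : Finset (ι → Bool) :=
  univ.filter fun b => ∃ A ∈ F, ∀ i, x i ∈ A ↔ b i = true

theorem mem_traces {F : Set (Set X)} {x : ι → X} {b : ι → Bool} :
    b ∈ traces F x ↔ ∃ A ∈ F, ∀ i, x i ∈ A ↔ b i = true := by
  simp [traces]

theorem traces_ne_univ_of_not_hasOpTree_one {F : Set (Set X)} {r : ℕ}
    (h : ¬ HasOpTree F r 1) (y : Fin r → X) : traces F y ≠ univ := by
  intro hy
  refine h ⟨fun _ => y, fun ξ => ?_⟩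
  obtain ⟨A, hA, hAξ⟩ := mem_traces.1 (hy ▸ mem_univ (ξ 0))
  exact ⟨A, hA, fun j i => by simpa [Subsingleton.elim j 0] using hAξ i⟩

theorem card_le_sum_choose_of_forall_shatters_card_lt {𝒜 : Finset (Finset ι)} {r : ℕ}
    (h : ∀ J, 𝒜.Shatters J → #J < r) :
    #𝒜 ≤ ∑ k ∈ range r, (Fintype.card ι).choose k := by
  simp_rw [← card_univ, ← card_powersetCard]
  refine (card_le_card_shatterer 𝒜).trans <| (card_le_card fun J hJ ↦ ?_).trans card_biUnion_le
  exact mem_biUnion.2 ⟨#J, mem_range.2 (h J (mem_shatterer.1 hJ)), mem_powersetCard_univ.2 rfl⟩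

theorem card_lt_of_shatters_traces {F : Set (Set X)} {r : ℕ}
    (h : ∀ y : Fin r → X, traces F y ≠ univ) {x : ι → X} {J : Finset ι}
    (hJ : ((traces F x).image fun b => univ.filter (b · = true)).Shatters J) : #J < r := by
  by_contra! hrJ
  obtain ⟨J', hJ'J, hJ'⟩ := exists_subset_card_eq hrJ
  let g : Fin r ≃ J' := (Fintype.equivFinOfCardEq (by simpa using hJ')).symm
  let e : Fin r ↪ ι := g.toEmbedding.trans (.subtype (· ∈ J'))
  have he : ∀ k, e k ∈ J' := fun k => (g k).2
  refine h (x ∘ e) (eq_univ_of_forall fun c => ?_)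
  have hcJ' : (univ.filter (c · = true)).map e ⊆ J' := fun _ hi => by
    obtain ⟨k, -, rfl⟩ := mem_map.1 hi
    exact he k
  obtain ⟨u, hu, hJ'u⟩ := hJ.mono_right hJ'J hcJ'
  obtain ⟨b, hb, rfl⟩ := mem_image.1 hu
  obtain ⟨A, hA, hAb⟩ := mem_traces.1 hb
  refine mem_traces.2 ⟨A, hA, fun k => ?_⟩
  simpa [he k, hAb] using congr(e k ∈ $hJ'u)

theorem card_traces_le {F : Set (Set X)} {r : ℕ} (h : ∀ y : Fin r → X, traces F y ≠ univ)
    (x : ι → X) : #(traces F x) ≤ ∑ k ∈ range r, (Fintype.card ι).choose k := by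
  have hinj : Set.InjOn (fun b : ι → Bool => univ.filter (b · = true)) (traces F x) :=
    fun b _ b' _ hbb' => funext fun i => Bool.coe_iff_coe.1 (by simpa using congr(i ∈ $hbb'))
  rw [← card_image_of_injOn hinj]
  exact card_le_sum_choose_of_forall_shatters_card_lt fun J hJ => card_lt_of_shatters_traces h hJ

end Traces

section Leaves

variable {X : Type*} {s : ℕ}

theorem opProper_cons_iff {T : List (Fin s → Bool) → Fin s → X} {n : ℕ} {b : Fin s → Bool}
    {η : Fin n → Fin s → Bool} {A : Set X} :
    OpProper T (Fin.cons b η : Fin (n + 1) → Fin s → Bool) A ↔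
      (∀ i, T [] i ∈ A ↔ b i = true) ∧ OpProper (fun l => T (b :: l)) η A := by
  simp [OpProper, Fin.forall_fin_succ, List.ofFn_succ]

open scoped Classical in
noncomputable def properLeaves (F : Set (Set X)) (T : List (Fin s → Bool) → Fin s → X) (n : ℕ) :
    Finset (Fin n → Fin s → Bool) :=
  univ.filter fun ξ => ∃ A ∈ F, OpProper T ξ A

theorem coe_properLeaves (F : Set (Set X)) (T : List (Fin s → Bool) → Fin s → X) (n : ℕ) :
    (properLeaves F T n : Set (Fin n → Fin s → Bool)) = {ξ | ∃ A ∈ F, OpProper T ξ A} := by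
  simp [properLeaves]

theorem properLeaves_succ_subset (F : Set (Set X)) (T : List (Fin s → Bool) → Fin s → X) (n : ℕ) :
    properLeaves F T (n + 1) ⊆ (traces F (T [])).biUnion fun b =>
      (properLeaves F (fun l => T (b :: l)) n).image (Fin.cons b) := by
  intro ξ hξ
  rw [← Fin.cons_self_tail ξ] at hξ ⊢
  obtain ⟨A, hA, hroot, htail⟩ : ∃ A ∈ F, _ ∧ _ := by
    simpa only [properLeaves, mem_filter, mem_univ, true_and, opProper_cons_iff] using hξ
  exact mem_biUnion.2 ⟨ξ 0, mem_traces.2 ⟨A, hA, hroot⟩,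
    mem_image_of_mem _ (by simpa [properLeaves] using ⟨A, hA, htail⟩)⟩

theorem card_properLeaves_le {F : Set (Set X)} {K : ℕ} (hK : ∀ x : Fin s → X, #(traces F x) ≤ K)
    (T : List (Fin s → Bool) → Fin s → X) (n : ℕ) : #(properLeaves F T n) ≤ K ^ n := by
  induction n generalizing T with
  | zero => exact (card_le_univ _).trans (by simp)
  | succ n ih =>
    calc #(properLeaves F T (n + 1))
        ≤ ∑ b ∈ traces F (T []),
            #((properLeaves F (fun l => T (b :: l)) n).image (Fin.cons b : _ → Fin (n + 1) → _)) :=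
          (card_le_card (properLeaves_succ_subset F T n)).trans card_biUnion_le
      _ ≤ ∑ _b ∈ traces F (T []), K ^ n := sum_le_sum fun b _ => card_image_le.trans (ih _)
      _ ≤ K ^ (n + 1) := by
          rw [sum_const, smul_eq_mul, pow_succ']
          exact Nat.mul_le_mul_right _ (hK _)

end Leaves

theorem op_rank_zero_shatter_bound_general {X : Type*} (F : Set (Set X)) (r : ℕ)
    (hrank : HasOpTree F r 0 ∧ ∀ m : ℕ, 0 < m → ¬ HasOpTree F r m)
    (s n : ℕ) :
    opShatter F s n ≤ (∑ i ∈ Finset.range r, s.choose i) ^ n := by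
  have htraces := traces_ne_univ_of_not_hasOpTree_one (hrank.2 1 one_pos)
  refine csSup_le' ?_
  rintro _ ⟨T, rfl⟩
  rw [← coe_properLeaves, Set.ncard_coe_finset]
  exact card_properLeaves_le (fun x => (card_traces_le htraces x).trans_eq (by simp)) T n

/-- If `opR_r(F) = 0` (with `r ≥ 1`), then for every `s ≥ 1` and `n ≥ 0`,
`ψ^s_F(n) ≤ (∑_{i=0}^{r−1} C(s,i))^n`. -/
theorem op_rank_zero_shatter_bound {X : Type*} (F : Set (Set X)) (r : ℕ) (hr : 1 ≤ r)
    (hrank : HasOpTree F r 0 ∧ ∀ m : ℕ, 0 < m → ¬ HasOpTree F r m)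
    (s n : ℕ) (hs : 1 ≤ s) :
    opShatter F s n ≤ (∑ i ∈ Finset.range r, s.choose i) ^ n :=
  op_rank_zero_shatter_bound_general F r hrank s n
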